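/- arXiv:q-alg/9505022 — 4 statements merged into one kernel-verified Lean document; each statement's English description precedes it below -/
import Mathlib

section
/- Let H be a Hopf algebra and V a vector space over F. Consider the tensor product H-module structure on H ⊗ V ⊗ H, where H ⊗ V is the free H-module on V (H acting on the left factor) and H carries the left H-action h · k = k S(h). Then the map i : H ⊗ V → H ⊗ V ⊗ H, h ⊗ v ↦ Σ_i h_{1i} ⊗ v ⊗ S(h_{2i}), is an H-module map (with respect to the tensor product H-action via Δ), and i is an isomorphism of H-modules onto its image H · V, the H-submodule generated by 1 ⊗ V ⊗ 1. In particular, H · V is a free H-module on V. -/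
open TensorProduct LinearMap

variable (F H V : Type*) [Field F] [Ring H] [HopfAlgebra F H] [AddCommGroup V] [Module F V]

/-- The map `i : H ⊗ V → H ⊗ V ⊗ H`, `h ⊗ v ↦ ∑ᵢ h₁ᵢ ⊗ v ⊗ S(h₂ᵢ)`. -/
noncomputable def iMap : H ⊗[F] V →ₗ[F] H ⊗[F] (V ⊗[F] H) :=
  (LinearMap.lTensor H
      ((TensorProduct.comm F H V).toLinearMap ∘ₗ
        LinearMap.rTensor V (HopfAlgebra.antipode (R := F) (A := H)))) ∘ₗ
    (TensorProduct.assoc F H H V).toLinearMap ∘ₗ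
    LinearMap.rTensor V (Coalgebra.comul (R := F) (A := H))

/-- The tensor-product `H`-action on `H ⊗ V ⊗ H`, where `H` acts on the first factor by
left multiplication, trivially on `V`, and on the last factor by `h · k = k S(h)`;
via `Δ`, `h` acts by `∑ᵢ (h₁ᵢ ⬝) ⊗ 1 ⊗ (⬝ S(h₂ᵢ))`. -/
noncomputable def act₂ : H →ₗ[F] (H ⊗[F] (V ⊗[F] H)) →ₗ[F] (H ⊗[F] (V ⊗[F] H)) :=
  ((TensorProduct.homTensorHomMap (RingHom.id F) H (V ⊗[F] H) H (V ⊗[F] H)) ∘ₗ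
      TensorProduct.map (LinearMap.mul F H)
        ((LinearMap.lTensorHom (R := F) (M := V) (N := H) (P := H)) ∘ₗ
          (LinearMap.mul F H).flip ∘ₗ (HopfAlgebra.antipode (R := F) (A := H)))) ∘ₗ
    Coalgebra.comul (R := F) (A := H)

/-! Everything rests on `i (h ⊗ v) = h · (1 ⊗ v ⊗ 1)`: it exhibits the image of `i` as `H · V`,
and makes `i` an `H`-module map because `act₂` is an action (`Δ` is multiplicative and `S`
antimultiplicative). Applying `ε` to the last factor undoes `i`, since `ε ∘ S = ε` and
`∑ h₁ ε(h₂) = h`. -/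

theorem LinearMap.range_eq_span_tmul {R M N P : Type*} [CommSemiring R] [AddCommMonoid M]
    [AddCommMonoid N] [AddCommMonoid P] [Module R M] [Module R N] [Module R P]
    (f : M ⊗[R] N →ₗ[R] P) :
    range f = Submodule.span R {y | ∃ m n, y = f (m ⊗ₜ n)} := by
  rw [range_eq_map, ← span_tmul_eq_top, Submodule.map_span]
  congr 1
  ext y
  simp [eq_comm]

section

open Coalgebra HopfAlgebra

variable {F H V}

theorem iMap_tmul {ι : Type*} (a : H) (v : V) (r : Repr F a ι) :
    iMap F H V (a ⊗ₜ v) = ∑ i ∈ r.index, r.left i ⊗ₜ (v ⊗ₜ antipode F (r.right i)) := by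
  simp [iMap, ← r.eq, sum_tmul]

theorem act₂_tmul {ι : Type*} (h : H) (r : Repr F h ι) (b : H) (v : V) (c : H) :
    act₂ F H V h (b ⊗ₜ (v ⊗ₜ c)) =
      ∑ i ∈ r.index, (r.left i * b) ⊗ₜ (v ⊗ₜ (c * antipode F (r.right i))) := by
  simp [act₂, ← r.eq]

theorem act₂_one_tmul_one (h : H) (v : V) :
    act₂ F H V h (1 ⊗ₜ (v ⊗ₜ 1)) = iMap F H V (h ⊗ₜ v) := by
  simp [act₂_tmul h (ℛ F h), iMap_tmul h v (ℛ F h)]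

theorem act₂_mul (h k : H) (y : H ⊗[F] (V ⊗[F] H)) :
    act₂ F H V (h * k) y = act₂ F H V h (act₂ F H V k y) := by
  induction y using TensorProduct.induction_on with
  | zero => simp
  | add y z hy hz => simp only [map_add, hy, hz]
  | tmul b w =>
    induction w using TensorProduct.induction_on with
    | zero => simp
    | add w w' hw hw' => simp only [tmul_add, map_add, hw, hw']
    | tmul v c =>
      simp only [act₂_tmul _ ((ℛ F h).mul (ℛ F k)), act₂_tmul k (ℛ F k), map_sum,
        act₂_tmul h (ℛ F h), Repr.mul_index, Repr.mul_left, Repr.mul_right, Finset.sum_product,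
        antipode_mul_antidistrib, mul_assoc]
      exact Finset.sum_comm

theorem iMap_rTensor_mulLeft (h : H) (x : H ⊗[F] V) :
    iMap F H V (rTensor V (mulLeft F h) x) = act₂ F H V h (iMap F H V x) := by
  induction x using TensorProduct.induction_on with
  | zero => simp
  | add x y hx hy => simp only [map_add, hx, hy]
  | tmul a v =>
    rw [rTensor_tmul, mulLeft_apply, ← act₂_one_tmul_one, act₂_mul, act₂_one_tmul_one]

variable (F H V) in
noncomputable def iMapRetraction : H ⊗[F] (V ⊗[F] H) →ₗ[F] H ⊗[F] V :=
  lTensor H ((TensorProduct.rid F V).toLinearMap ∘ₗ lTensor V (counit (R := F) (A := H)))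

theorem iMapRetraction_iMap (x : H ⊗[F] V) : iMapRetraction F H V (iMap F H V x) = x := by
  induction x using TensorProduct.induction_on with
  | zero => simp
  | add x y hx hy => simp only [map_add, hx, hy]
  | tmul a v =>
    have counit_right :
        ∑ i ∈ (ℛ F a).index, counit (R := F) ((ℛ F a).right i) • (ℛ F a).left i = a := by
      simpa only [map_sum, rid_tmul, one_smul] using
        congr(TensorProduct.rid F H $(sum_tmul_counit_eq (ℛ F a)))
    simp [iMapRetraction, iMap_tmul a v (ℛ F a), ← sum_tmul, smul_tmul', counit_right]

theorem iMap_injective : Function.Injective (iMap F H V) :=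
  Function.LeftInverse.injective iMapRetraction_iMap

theorem range_iMap :
    range (iMap F H V) =
      Submodule.span F {y | ∃ (h : H) (v : V), y = act₂ F H V h (1 ⊗ₜ (v ⊗ₜ 1))} := by
  simp only [act₂_one_tmul_one]
  exact range_eq_span_tmul _

end

/-- `i : h ⊗ v ↦ ∑ᵢ h₁ᵢ ⊗ v ⊗ S(h₂ᵢ)` is an `H`-module map from the free
`H`-module `H ⊗ V` (with `H` acting by left multiplication on the first factor) to
`H ⊗ V ⊗ H` with the tensor-product action `act₂`, and it is an isomorphism onto its image
`H · V`, the `H`-submodule generated by `1 ⊗ V ⊗ 1`.  In particular `H · V` is a free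
`H`-module on `V`. -/
theorem iMap_module_map_injective_range :
    (∀ (h : H) (x : H ⊗[F] V),
      iMap F H V (LinearMap.rTensor V (LinearMap.mulLeft F h) x) =
        act₂ F H V h (iMap F H V x)) ∧
    Function.Injective (iMap F H V) ∧
    LinearMap.range (iMap F H V) =
      Submodule.span F
        {y : H ⊗[F] (V ⊗[F] H) | ∃ (h : H) (v : V),
          y = act₂ F H V h ((1 : H) ⊗ₜ[F] (v ⊗ₜ[F] (1 : H)))} :=
  ⟨iMap_rTensor_mulLeft, iMap_injective, range_iMap⟩
end

section
/- Let 𝔤 be a Lie algebra and V a vector space over a field F, and let 𝔞 be the Lie algebra freely generated by 𝔤 and V (so 𝔤 ⊆ 𝔞 and V ⊆ 𝔞). Then the 𝔤-submodule U(𝔤)·V of 𝔞 generated by V under the adjoint action is isomorphic, as a 𝔤-module, to the free 𝔤-module U(𝔤) ⊗ V on V. -/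
/-!
The map `u ⊗ v ↦ u · v` is `U(𝔤)`-linear, so its image is the smallest `ad 𝔤`-stable subspace
containing `V`. For injectivity, let `M = U(𝔤) ⊗ V` act on itself by left multiplication and
represent `𝔤 ⋉ M` affinely on `M × F`: `x` acts as `x ⊕ 0` and `m ∈ M` as `(n, c) ↦ (c • m, 0)`.
By freeness `𝔞` maps to this Lie algebra, and reading off the translation part of the image of
`a ∈ 𝔞` gives a `𝔤`-equivariant left inverse of `U(𝔤) ⊗ V → 𝔞`.
-/

open TensorProduct

universe v w

section

attribute [local instance 100] LieRing.ofAssociativeRing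

namespace UniversalEnvelopingAlgebra

variable {R L : Type*} [CommRing R] [LieRing L] [LieAlgebra R L]

theorem mkAlgHom_surjective : Function.Surjective (mkAlgHom R L) :=
  (ringCon R L).mk'_surjective

@[elab_as_elim]
theorem induction {C : UniversalEnvelopingAlgebra R L → Prop}
    (algebraMap : ∀ r, C (algebraMap R _ r)) (ι : ∀ x, C (ι R x))
    (mul : ∀ a b, C a → C b → C (a * b)) (add : ∀ a b, C a → C b → C (a + b))
    (u : UniversalEnvelopingAlgebra R L) : C u := by
  obtain ⟨t, rfl⟩ := mkAlgHom_surjective u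
  induction t using TensorAlgebra.induction with
  | algebraMap r => simpa only [AlgHom.commutes] using algebraMap r
  | ι x => exact ι x
  | mul a b ha hb => simpa only [map_mul] using mul _ _ ha hb
  | add a b ha hb => simpa only [map_add] using add _ _ ha hb

instance small [Small.{w} R] [Small.{w} L] : Small.{w} (UniversalEnvelopingAlgebra R L) :=
  have : Small.{w} (FreeMonoid L) := small_map FreeMonoid.toList
  have : Small.{w} (FreeAlgebra R L) :=
    small_map (FreeAlgebra.equivMonoidAlgebraFreeMonoid.toEquiv.trans MonoidAlgebra.coeffEquiv)
  have : Small.{w} (TensorAlgebra R L) :=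
    small_of_surjective (TensorAlgebra.ringCon R L).mk'_surjective
  small_of_surjective mkAlgHom_surjective

variable {M N : Type*} [AddCommGroup M] [Module R M] [AddCommGroup N] [Module R N]

theorem apply_mem_of_forall_ι (ρ : UniversalEnvelopingAlgebra R L →ₐ[R] Module.End R M)
    {p : Submodule R M} (h : ∀ x, ∀ m ∈ p, ρ (ι R x) m ∈ p) (u : UniversalEnvelopingAlgebra R L) :
    ∀ m ∈ p, ρ u m ∈ p := by
  induction u using induction with
  | algebraMap r => intro m hm; simpa [Module.algebraMap_end_apply] using p.smul_mem r hm
  | ι x => exact h x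
  | mul a b ha hb => intro m hm; rw [map_mul, Module.End.mul_apply]; exact ha _ (hb m hm)
  | add a b ha hb =>
    intro m hm
    rw [map_add, LinearMap.add_apply]
    exact p.add_mem (ha m hm) (hb m hm)

theorem comp_eq_of_forall_ι (σ : M →ₗ[R] N)
    (ρ₁ : UniversalEnvelopingAlgebra R L →ₐ[R] Module.End R M)
    (ρ₂ : UniversalEnvelopingAlgebra R L →ₐ[R] Module.End R N)
    (h : ∀ x, σ ∘ₗ ρ₁ (ι R x) = ρ₂ (ι R x) ∘ₗ σ) (u : UniversalEnvelopingAlgebra R L) :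
    σ ∘ₗ ρ₁ u = ρ₂ u ∘ₗ σ := by
  induction u using induction with
  | algebraMap r => ext; simp
  | ι x => exact h x
  | mul a b ha hb =>
    simp only [map_mul, Module.End.mul_eq_comp, ← LinearMap.comp_assoc, ha]
    simp only [LinearMap.comp_assoc, hb]
  | add a b ha hb => simp only [map_add, LinearMap.comp_add, LinearMap.add_comp, ha, hb]

end UniversalEnvelopingAlgebra

section FreeLift

variable {R A V M N : Type*} [CommRing R] [Ring A] [Algebra R A] [AddCommGroup V] [Module R V]
  [AddCommGroup M] [Module R M] [AddCommGroup N] [Module R N]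

def freeLift (ρ : A →ₐ[R] Module.End R M) (j : V →ₗ[R] M) : A ⊗[R] V →ₗ[R] M :=
  TensorProduct.lift (LinearMap.lcomp R M j ∘ₗ ρ.toLinearMap)

variable (ρ : A →ₐ[R] Module.End R M) (j : V →ₗ[R] M)

@[simp]
theorem freeLift_tmul (a : A) (v : V) : freeLift ρ j (a ⊗ₜ v) = ρ a (j v) := rfl

theorem freeLift_smul (a : A) (t : A ⊗[R] V) : freeLift ρ j (a • t) = ρ a (freeLift ρ j t) := by
  induction t using TensorProduct.induction_on with
  | zero => simp
  | tmul b v => simp [smul_tmul']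
  | add s t hs ht => simp [hs, ht]

theorem freeLift_lsmul_mk_one :
    freeLift (Algebra.lsmul R R (A ⊗[R] V)) (TensorProduct.mk R A V 1) = LinearMap.id := by
  ext a v
  simp [smul_tmul']

theorem comp_freeLift (σ : M →ₗ[R] N) {ρ' : A →ₐ[R] Module.End R N}
    (h : ∀ a, σ ∘ₗ ρ a = ρ' a ∘ₗ σ) : σ ∘ₗ freeLift ρ j = freeLift ρ' (σ ∘ₗ j) := by
  ext a v
  simpa using LinearMap.congr_fun (h a) (j v)

end FreeLift

section Range

open UniversalEnvelopingAlgebra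

variable {R L V M : Type*} [CommRing R] [LieRing L] [LieAlgebra R L] [AddCommGroup V] [Module R V]
  [AddCommGroup M] [Module R M]

theorem range_freeLift (ρ : UniversalEnvelopingAlgebra R L →ₐ[R] Module.End R M)
    (j : V →ₗ[R] M) :
    LinearMap.range (freeLift ρ j) =
      sInf {p : Submodule R M | LinearMap.range j ≤ p ∧ ∀ x, ∀ m ∈ p, ρ (ι R x) m ∈ p} := by
  apply le_antisymm
  · refine le_sInf fun p ⟨hj, hp⟩ => ?_
    rintro _ ⟨t, rfl⟩
    induction t using TensorProduct.induction_on with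
    | zero => simp
    | tmul u v => exact apply_mem_of_forall_ι ρ hp u _ (hj ⟨v, rfl⟩)
    | add s t hs ht => rw [map_add]; exact add_mem hs ht
  · refine sInf_le ⟨?_, ?_⟩
    · rintro _ ⟨v, rfl⟩
      exact ⟨1 ⊗ₜ v, by simp⟩
    · rintro x _ ⟨t, rfl⟩
      exact ⟨ι R x • t, freeLift_smul ρ j _ t⟩

end Range

section Affine

variable (R : Type*) {N : Type*} [CommRing R] [AddCommGroup N] [Module R N]

def translation : N →ₗ[R] Module.End R (N × R) :=
  LinearMap.smulRightₗ (LinearMap.snd R N R) ∘ₗ LinearMap.inl R N R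

variable {R}

def translationPart : Module.End R (N × R) →ₗ[R] N :=
  LinearMap.fst R N R ∘ₗ LinearMap.applyₗ (0, 1)

@[simp]
theorem translationPart_translation (n : N) : translationPart (translation R n) = n := by
  simp [translation, translationPart]

theorem translationPart_lie_prodMap_zero (f : Module.End R N) (A : Module.End R (N × R)) :
    translationPart ⁅f.prodMap (0 : Module.End R R), A⁆ = f (translationPart A) := by
  simp [translationPart, LieRing.of_associative_ring_bracket, Prod.mk_zero_zero]

variable {L : Type*} [LieRing L] [LieAlgebra R L]

def LieHom.prodMapZero (ρ : L →ₗ⁅R⁆ Module.End R N) : L →ₗ⁅R⁆ Module.End R (N × R) where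
  toFun x := (ρ x).prodMap 0
  map_add' x y := by ext <;> simp
  map_smul' c x := by ext <;> simp
  map_lie' {x y} := by ext <;> simp [LieRing.of_associative_ring_bracket]

end Affine

section FreeLieAlgebra

open UniversalEnvelopingAlgebra

variable {F 𝔤 V 𝔞 : Type*} [CommRing F] [LieRing 𝔤] [LieAlgebra F 𝔤] [AddCommGroup V]
  [Module F V] [LieRing 𝔞] [LieAlgebra F 𝔞] (ι𝔤 : 𝔤 →ₗ⁅F⁆ 𝔞) (ιV : V →ₗ[F] 𝔞)

def adAction : UniversalEnvelopingAlgebra F 𝔤 →ₐ[F] Module.End F 𝔞 :=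
  UniversalEnvelopingAlgebra.lift F ((LieAlgebra.ad F 𝔞).comp ι𝔤)

@[simp]
theorem adAction_ι (x : 𝔤) (a : 𝔞) : adAction ι𝔤 (ι F x) a = ⁅ι𝔤 x, a⁆ := by
  simp [adAction]

theorem translationPart_comp_freeLift_adAction {N : Type*} [AddCommGroup N] [Module F N]
    (ρ : UniversalEnvelopingAlgebra F 𝔤 →ₐ[F] Module.End F N) (j : V →ₗ[F] N)
    (Φ : 𝔞 →ₗ⁅F⁆ Module.End F (N × F)) (hΦ𝔤 : ∀ x, Φ (ι𝔤 x) = (ρ (ι F x)).prodMap 0)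
    (hΦV : ∀ v, Φ (ιV v) = translation F (j v)) :
    (translationPart ∘ₗ (Φ : 𝔞 →ₗ[F] Module.End F (N × F))) ∘ₗ freeLift (adAction ι𝔤) ιV =
      freeLift ρ j := by
  set σ := translationPart ∘ₗ (Φ : 𝔞 →ₗ[F] Module.End F (N × F))
  have hσ𝔤 : ∀ x, σ ∘ₗ adAction ι𝔤 (ι F x) = ρ (ι F x) ∘ₗ σ := by
    refine fun x => LinearMap.ext fun a => ?_
    simp only [σ, LinearMap.comp_apply, LieHom.coe_toLinearMap, adAction_ι, LieHom.map_lie, hΦ𝔤,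
      translationPart_lie_prodMap_zero]
  have hσV : σ ∘ₗ ιV = j := by
    ext v
    simp [σ, hΦV]
  rw [comp_freeLift _ _ _ (comp_eq_of_forall_ι σ _ ρ hσ𝔤), hσV]

theorem exists_lieHom_end_of_small
    (hUP : ∀ (K : Type v) [LieRing K] [LieAlgebra F K] (f : 𝔤 →ₗ⁅F⁆ K) (g : V →ₗ[F] K),
      ∃ φ : 𝔞 →ₗ⁅F⁆ K, (∀ x, φ (ι𝔤 x) = f x) ∧ ∀ v, φ (ιV v) = g v)
    (X : Type*) [AddCommGroup X] [Module F X] [Small.{v} X]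
    (f : 𝔤 →ₗ⁅F⁆ Module.End F X) (g : V →ₗ[F] Module.End F X) :
    ∃ φ : 𝔞 →ₗ⁅F⁆ Module.End F X, (∀ x, φ (ι𝔤 x) = f x) ∧ ∀ v, φ (ιV v) = g v := by
  let e := (Shrink.linearEquiv F X).lieConj
  obtain ⟨φ, hf, hg⟩ := hUP _ (e.symm.toLieHom.comp f) (e.symm.toLinearMap ∘ₗ g)
  exact ⟨e.toLieHom.comp φ, fun x => by simp [hf], fun v => by simp [hg]⟩

theorem injective_freeLift_adAction
    (hUP : ∀ (K : Type v) [LieRing K] [LieAlgebra F K] (f : 𝔤 →ₗ⁅F⁆ K) (g : V →ₗ[F] K),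
      ∃ φ : 𝔞 →ₗ⁅F⁆ K, (∀ x, φ (ι𝔤 x) = f x) ∧ ∀ v, φ (ιV v) = g v)
    [Small.{v} F] [Small.{v} 𝔤] [Small.{v} V] :
    Function.Injective (freeLift (adAction ι𝔤) ιV) := by
  set M := UniversalEnvelopingAlgebra F 𝔤 ⊗[F] V
  obtain ⟨Φ, hΦ𝔤, hΦV⟩ := exists_lieHom_end_of_small ι𝔤 ιV hUP (M × F)
    (LieHom.prodMapZero ((UniversalEnvelopingAlgebra.lift F).symm (Algebra.lsmul F F M)))
    (translation F ∘ₗ TensorProduct.mk F _ V 1)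
  have h := translationPart_comp_freeLift_adAction ι𝔤 ιV (Algebra.lsmul F F M) _ Φ hΦ𝔤 hΦV
  rw [freeLift_lsmul_mk_one] at h
  exact LinearMap.injective_of_comp_eq_id _ _ h

end FreeLieAlgebra

end

/-- let `𝔞` be the Lie algebra freely generated by a Lie algebra `𝔤` and a
vector space `V` (characterized by its universal property).  Then the `𝔤`-submodule
`U(𝔤)·V` of `𝔞` generated by `V` under the adjoint action is isomorphic, as a
`𝔤`-module, to the free `𝔤`-module `U(𝔤) ⊗ V`. -/
theorem free_module_in_freely_generated_lie_algebra
    (F : Type*) (𝔤 V 𝔞 : Type u) [Field F] [LieRing 𝔤] [LieAlgebra F 𝔤]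
    [AddCommGroup V] [Module F V] [LieRing 𝔞] [LieAlgebra F 𝔞]
    (ι𝔤 : 𝔤 →ₗ⁅F⁆ 𝔞) (ιV : V →ₗ[F] 𝔞)
    (hUP : ∀ (K : Type u) (_ : LieRing K) (_ : LieAlgebra F K)
        (f : 𝔤 →ₗ⁅F⁆ K) (g : V →ₗ[F] K),
      ∃! φ : 𝔞 →ₗ⁅F⁆ K, (∀ x, φ (ι𝔤 x) = f x) ∧ (∀ v, φ (ιV v) = g v))
    (W : Submodule F 𝔞)
    (hW : W = sInf {p : Submodule F 𝔞 |
      LinearMap.range ιV ≤ p ∧ ∀ (x : 𝔤), ∀ a ∈ p, ⁅ι𝔤 x, a⁆ ∈ p}) :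
    ∃ φ : (UniversalEnvelopingAlgebra F 𝔤) ⊗[F] V →ₗ[F] 𝔞,
      Function.Injective φ ∧
      LinearMap.range φ = W ∧
      (∀ v : V, φ ((1 : UniversalEnvelopingAlgebra F 𝔤) ⊗ₜ[F] v) = ιV v) ∧
      (∀ (x : 𝔤) (u : UniversalEnvelopingAlgebra F 𝔤) (v : V),
        φ ((UniversalEnvelopingAlgebra.ι F x * u) ⊗ₜ[F] v) = ⁅ι𝔤 x, φ (u ⊗ₜ[F] v)⁆) := by
  refine ⟨freeLift (adAction ι𝔤) ιV, ?_, ?_, fun v => by simp, fun x u v => by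
    simp only [freeLift_tmul, map_mul, Module.End.mul_apply, adAction_ι]⟩
  · rcases subsingleton_or_nontrivial V with hV | hV
    · exact Function.injective_of_subsingleton _
    obtain ⟨v₀, hv₀⟩ := exists_ne (0 : V)
    -- the universal property only reaches `Type u`; `F` embeds in `V`, hence is `u`-small
    have : Small.{u} F := small_of_injective (smul_left_injective F hv₀)
    exact injective_freeLift_adAction ι𝔤 ιV fun K _ _ f g => (hUP K _ _ f g).exists
  · rw [hW, range_freeLift]
    simp only [adAction_ι]
end

section
/- Let V and W be vector spaces over a field F. Inside the free Lie algebra F(V ⊕ W), the F(W)-module T(W)·V generated by V (under the adjoint action, where T(W) = U(F(W))) is isomorphic, as a module over the free Lie algebra F(W), to the free F(W)-module T(W) ⊗ V on V. -/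
/-!
Let `ad : T(W) → End T(V ⊕ W)` be the algebra map extending `w ↦ [w, -]`. The map
`u ⊗ v ↦ ad(u) v` is `T(W)`-linear, and its image is the smallest subspace containing `V` and
stable under `ad W`; that image lies in the Lie span of `V ⊕ W`.

It is injective because it has a left inverse. Let `T(V ⊕ W)` act on `(T(W) ⊗ V) × F` so that
`v` sends the unit line `(0, 1)` to `(1 ⊗ v, 0)` and kills `T(W) ⊗ V`, while `w` kills `(0, 1)`
and multiplies `T(W) ⊗ V` on the left. As `w` kills `(0, 1)`, the commutator `[w, c]` acts on
`(0, 1)` as `w` after `c`, hence `ad(u) v` sends `(0, 1)` to `(u ⊗ v, 0)`.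
-/

open TensorProduct

attribute [local instance 100] LieRing.ofAssociativeRing

namespace TensorAlgebra

theorem ι_mul_sub_mem_lieSpan {R M : Type*} [CommRing R] [AddCommGroup M] [Module R M] (x : M)
    {c : TensorAlgebra R M} (hc : c ∈ LieSubalgebra.lieSpan R _ (Set.range (ι R))) :
    ι R x * c - c * ι R x ∈ LieSubalgebra.lieSpan R _ (Set.range (ι R)) := by
  simpa only [Ring.lie_def] using
    (LieSubalgebra.lieSpan R _ _).lie_mem (LieSubalgebra.subset_lieSpan (Set.mem_range_self x)) hc

section AdLift

variable {R A W : Type*} [CommRing R] [Ring A] [Algebra R A] [AddCommGroup W] [Module R W]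

noncomputable def adLift (f : W →ₗ[R] A) : TensorAlgebra R W →ₐ[R] Module.End R A :=
  lift R ((LieAlgebra.ad R A : A →ₗ[R] Module.End R A) ∘ₗ f)

theorem adLift_ι (f : W →ₗ[R] A) (w : W) (c : A) :
    adLift f (ι R w) c = f w * c - c * f w := by
  simp [adLift, Ring.lie_def]

theorem adLift_apply_mem (f : W →ₗ[R] A) {p : Submodule R A}
    (hp : ∀ w, ∀ c ∈ p, f w * c - c * f w ∈ p) (u : TensorAlgebra R W) {c : A} (hc : c ∈ p) :
    adLift f u c ∈ p := by
  induction u using TensorAlgebra.induction generalizing c with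
  | algebraMap r => simpa [Algebra.algebraMap_eq_smul_one] using p.smul_mem r hc
  | ι w => simpa only [adLift_ι] using hp w c hc
  | mul u₁ u₂ h₁ h₂ => rw [map_mul, Module.End.mul_apply]; exact h₁ (h₂ hc)
  | add u₁ u₂ h₁ h₂ => rw [map_add, LinearMap.add_apply]; exact p.add_mem (h₁ hc) (h₂ hc)

theorem apply_adLift_apply {M : Type*} [AddCommGroup M] [Module R M]
    (ρ : A →ₐ[R] Module.End R M) (f : W →ₗ[R] A) {m : M} (hm : ∀ w, ρ (f w) m = 0)
    (u : TensorAlgebra R W) (c : A) :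
    ρ (adLift f u c) m = ρ (lift R f u) (ρ c m) := by
  induction u using TensorAlgebra.induction generalizing c with
  | algebraMap r => simp [Algebra.algebraMap_eq_smul_one]
  | ι w => simp [adLift_ι, hm]
  | mul u₁ u₂ h₁ h₂ => simp [h₁, h₂]
  | add u₁ u₂ h₁ h₂ => simp [h₁, h₂]

end AdLift

variable (F V W : Type*) [Field F] [AddCommGroup V] [Module F V] [AddCommGroup W] [Module F W]

noncomputable def ιInr : W →ₗ[F] TensorAlgebra F (V × W) := ι F ∘ₗ LinearMap.inr F V W

noncomputable def freeModuleMap : TensorAlgebra F W ⊗[F] V →ₗ[F] TensorAlgebra F (V × W) :=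
  TensorProduct.lift ((adLift (ιInr F V W)).toLinearMap.compl₂ (ι F ∘ₗ LinearMap.inl F V W))

variable {F V W}

theorem freeModuleMap_tmul (u : TensorAlgebra F W) (v : V) :
    freeModuleMap F V W (u ⊗ₜ v) = adLift (ιInr F V W) u (ι F (LinearMap.inl F V W v)) := rfl

theorem freeModuleMap_smul (u : TensorAlgebra F W) (t : TensorAlgebra F W ⊗[F] V) :
    freeModuleMap F V W (u • t) = adLift (ιInr F V W) u (freeModuleMap F V W t) := by
  induction t using TensorProduct.induction_on with
  | zero => simp
  | tmul a v => simp [TensorProduct.smul_tmul', freeModuleMap_tmul]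
  | add a b ha hb => simp [ha, hb]

noncomputable def augmentedAction : V × W →ₗ[F] Module.End F ((TensorAlgebra F W ⊗[F] V) × F) :=
  LinearMap.mk₂ F (fun p xc => (xc.2 • ((1 : TensorAlgebra F W) ⊗ₜ p.1) + ι F p.2 • xc.1, 0))
    (by intros; ext <;> simp [tmul_add, add_smul, add_add_add_comm])
    (by intros; ext <;> simp [tmul_smul, smul_add, smul_smul, mul_comm])
    (by intros; ext <;> simp [add_smul, add_add_add_comm])
    (fun c p _ => by ext <;> simp [smul_add, mul_smul, smul_comm (ι F p.2) c])

theorem augmentedAction_apply (p : V × W) (xc : (TensorAlgebra F W ⊗[F] V) × F) :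
    augmentedAction p xc = (xc.2 • ((1 : TensorAlgebra F W) ⊗ₜ p.1) + ι F p.2 • xc.1, 0) := rfl

variable (F V W) in
noncomputable def augmentedRep :
    TensorAlgebra F (V × W) →ₐ[F] Module.End F ((TensorAlgebra F W ⊗[F] V) × F) :=
  lift F augmentedAction

theorem augmentedRep_lift_ιInr_apply (u : TensorAlgebra F W) (x : TensorAlgebra F W ⊗[F] V) :
    augmentedRep F V W (lift F (ιInr F V W) u) (x, 0) = (u • x, 0) := by
  induction u using TensorAlgebra.induction generalizing x with
  | algebraMap r => simp [Algebra.algebraMap_eq_smul_one, smul_assoc]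
  | ι w => simp [augmentedRep, ιInr, augmentedAction_apply]
  | mul u₁ u₂ h₁ h₂ => simp [h₁, h₂, mul_smul]
  | add u₁ u₂ h₁ h₂ => simp [h₁, h₂, add_smul]

variable (F V W) in
noncomputable def retraction : TensorAlgebra F (V × W) →ₗ[F] TensorAlgebra F W ⊗[F] V :=
  LinearMap.fst F _ F ∘ₗ LinearMap.applyₗ ((0 : TensorAlgebra F W ⊗[F] V), (1 : F)) ∘ₗ
    (augmentedRep F V W).toLinearMap

theorem retraction_comp_freeModuleMap :
    retraction F V W ∘ₗ freeModuleMap F V W = LinearMap.id := by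
  refine TensorProduct.ext' fun u v => ?_
  have hW : ∀ w, augmentedRep F V W (ιInr F V W w) (0, 1) = 0 := fun w => by
    simp [augmentedRep, ιInr, augmentedAction_apply]
  have hV : augmentedRep F V W (ι F (LinearMap.inl F V W v)) (0, 1) = (1 ⊗ₜ v, 0) := by
    simp [augmentedRep, augmentedAction_apply]
  simp only [retraction, LinearMap.comp_apply, freeModuleMap_tmul, AlgHom.toLinearMap_apply,
    LinearMap.applyₗ_apply_apply, apply_adLift_apply _ _ hW, hV, augmentedRep_lift_ιInr_apply]
  simp [smul_tmul']

theorem freeModuleMap_injective : Function.Injective (freeModuleMap F V W) :=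
  LinearMap.injective_of_comp_eq_id _ _ retraction_comp_freeModuleMap

theorem range_freeModuleMap_le {p : Submodule F (TensorAlgebra F (V × W))}
    (hV : LinearMap.range (ι F ∘ₗ LinearMap.inl F V W) ≤ p)
    (hW : ∀ w, ∀ c ∈ p, ιInr F V W w * c - c * ιInr F V W w ∈ p) :
    LinearMap.range (freeModuleMap F V W) ≤ p := by
  rintro _ ⟨t, rfl⟩
  induction t using TensorProduct.induction_on with
  | zero => simp
  | tmul u v => exact adLift_apply_mem _ hW u (hV ⟨v, rfl⟩)
  | add a b ha hb => simpa using p.add_mem ha hb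

theorem range_ι_inl_le_range_freeModuleMap :
    LinearMap.range (ι F ∘ₗ LinearMap.inl F V W) ≤ LinearMap.range (freeModuleMap F V W) := by
  rintro _ ⟨v, rfl⟩
  exact ⟨1 ⊗ₜ v, by simp [freeModuleMap_tmul]⟩

theorem ιInr_mul_sub_mem_range_freeModuleMap (w : W) {c : TensorAlgebra F (V × W)}
    (hc : c ∈ LinearMap.range (freeModuleMap F V W)) :
    ιInr F V W w * c - c * ιInr F V W w ∈ LinearMap.range (freeModuleMap F V W) := by
  obtain ⟨t, rfl⟩ := hc
  exact ⟨ι F w • t, by rw [freeModuleMap_smul, adLift_ι]⟩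

end TensorAlgebra

/-- inside the free Lie algebra `F(V ⊕ W)`, realized in the tensor algebra
`T(V ⊕ W)` as the Lie subalgebra generated by `V ⊕ W`, the `F(W)`-submodule `T(W)·V`
generated by `V` under the adjoint action is a free `F(W)`-module (equivalently, free
`T(W)`-module) on `V`, i.e. it is the isomorphic image of `T(W) ⊗ V` under an injective
map intertwining left multiplication by `W` in `T(W)` with `ad` of `W`. -/
theorem TWV_free_module_over_TW
    (F V W : Type*) [Field F] [AddCommGroup V] [Module F V] [AddCommGroup W] [Module F W]
    (TWV : Submodule F (TensorAlgebra F (V × W)))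
    (hTWV : TWV = sInf {p : Submodule F (TensorAlgebra F (V × W)) |
      LinearMap.range ((TensorAlgebra.ι F) ∘ₗ (LinearMap.inl F V W)) ≤ p ∧
      ∀ (w : W), ∀ c ∈ p,
        TensorAlgebra.ι F ((LinearMap.inr F V W) w) * c -
          c * TensorAlgebra.ι F ((LinearMap.inr F V W) w) ∈ p}) :
    TWV ≤ LieSubalgebra.toSubmodule
        (LieSubalgebra.lieSpan F (TensorAlgebra F (V × W))
          (Set.range (TensorAlgebra.ι F))) ∧
    ∃ φ : (TensorAlgebra F W) ⊗[F] V →ₗ[F] TensorAlgebra F (V × W),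
      Function.Injective φ ∧
      LinearMap.range φ = TWV ∧
      (∀ v : V, φ ((1 : TensorAlgebra F W) ⊗ₜ[F] v) =
        TensorAlgebra.ι F ((LinearMap.inl F V W) v)) ∧
      (∀ (w : W) (u : TensorAlgebra F W) (v : V),
        φ ((TensorAlgebra.ι F w * u) ⊗ₜ[F] v) =
          TensorAlgebra.ι F ((LinearMap.inr F V W) w) * φ (u ⊗ₜ[F] v) -
            φ (u ⊗ₜ[F] v) * TensorAlgebra.ι F ((LinearMap.inr F V W) w)) := by
  have hrange : LinearMap.range (TensorAlgebra.freeModuleMap F V W) = TWV := hTWV ▸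
    le_antisymm (le_sInf fun p hp => TensorAlgebra.range_freeModuleMap_le hp.1 hp.2)
      (sInf_le ⟨TensorAlgebra.range_ι_inl_le_range_freeModuleMap,
        fun w _ => TensorAlgebra.ιInr_mul_sub_mem_range_freeModuleMap w⟩)
  refine ⟨hrange ▸ TensorAlgebra.range_freeModuleMap_le ?_
      fun w _ => TensorAlgebra.ι_mul_sub_mem_lieSpan _,
    TensorAlgebra.freeModuleMap F V W, TensorAlgebra.freeModuleMap_injective, hrange,
    fun v => by simp [TensorAlgebra.freeModuleMap_tmul], fun w u v => ?_⟩
  · rintro _ ⟨v, rfl⟩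
    exact LieSubalgebra.subset_lieSpan ⟨_, rfl⟩
  · rw [← smul_eq_mul, ← smul_tmul', TensorAlgebra.freeModuleMap_smul, TensorAlgebra.adLift_ι]
    rfl
end

section
/- Let V and W be vector spaces. Then the tensor algebra T(V ⊕ W) is isomorphic as an algebra to the smash product T(T(W)·V) # T(W), where T(W)·V is the T(W)-submodule of T(V ⊕ W) generated by V under the adjoint action of the Hopf algebra T(W), and T(T(W)·V) is the subalgebra of T(V ⊕ W) generated by T(W)·V (isomorphic to the tensor algebra on T(W)·V). -/
/-!
Let `N = T(W)·V`. Let `T(V × W)` act on `T(N) ⊗ T(W)`: `v` multiplies the left factor and `w`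
acts by `D_w ⊗ 1 + 1 ⊗ w`, where `D_w` is the derivation of `T(N)` extending `ad w` (which
preserves `N`). The multiplication map `μ : b ⊗ h ↦ b h` intertwines this action with left
multiplication, so `μ (a • (1 ⊗ 1)) = a`. Conversely, by minimality of `N` each `x ∈ N` acts as
left multiplication by the generator `x` of `T(N)`, whence `μ (b ⊗ h) • (1 ⊗ 1) = b ⊗ h`. So `μ`
is bijective, and `T(N) → T(V × W)`, `T(W) → T(V × W)` are injective because they factor through
`μ` and the maps `b ↦ b ⊗ 1`, `h ↦ 1 ⊗ h`, which the augmentations split.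
-/

open TensorProduct LinearMap

lemma LinearMap.map_one_eq_zero_of_leibniz {R A : Type*} [CommSemiring R] [Ring A]
    [Algebra R A] {D : Module.End R A} (hD : ∀ a b, D (a * b) = D a * b + a * D b) : D 1 = 0 := by
  simpa using hD 1 1

lemma LinearMap.rTensor_add_lTensor_commutator {R M N : Type*} [CommSemiring R]
    [AddCommGroup M] [Module R M] [AddCommGroup N] [Module R N] (f g : Module.End R M)
    (h : Module.End R N) :
    (rTensor N f + lTensor M h) * rTensor N g - rTensor N g * (rTensor N f + lTensor M h) =
      rTensor N (f * g - g * f) := by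
  simp only [Module.End.mul_eq_comp, add_comp, comp_add, lTensor_comp_rTensor,
    rTensor_comp_lTensor, rTensor_sub, rTensor_comp]
  abel

lemma Algebra.commutator_mem_adjoin {R A : Type*} [CommSemiring R] [Ring A] [Algebra R A]
    {s : Set A} {a : A} (hs : ∀ x ∈ s, a * x - x * a ∈ adjoin R s) {y : A}
    (hy : y ∈ adjoin R s) : a * y - y * a ∈ adjoin R s := by
  induction hy using Algebra.adjoin_induction with
  | mem x hx => exact hs x hx
  | algebraMap r => simp [Algebra.commutes]
  | add x y _ _ hx hy =>
    convert add_mem hx hy using 1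
    noncomm_ring
  | mul x y hx' hy' hx hy =>
    convert add_mem (mul_mem hx hy') (mul_mem hx' hy) using 1
    noncomm_ring

namespace TensorAlgebra

lemma tmul_one_injective {R M : Type*} [CommSemiring R] [AddCommMonoid M] [Module R M]
    (A : Type*) [AddCommMonoid A] [Module R A] :
    Function.Injective fun a : A => a ⊗ₜ[R] (1 : TensorAlgebra R M) :=
  fun a b h => by
    simpa [algebraMapInv] using
      congrArg (TensorProduct.rid R A ∘ lTensor A algebraMapInv.toLinearMap) h

lemma one_tmul_injective {R M : Type*} [CommSemiring R] [AddCommMonoid M] [Module R M]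
    (A : Type*) [AddCommMonoid A] [Module R A] :
    Function.Injective fun a : A => (1 : TensorAlgebra R M) ⊗ₜ[R] a :=
  fun a b h => by
    simpa [algebraMapInv] using
      congrArg (TensorProduct.lid R A ∘ rTensor A algebraMapInv.toLinearMap) h

section

variable {R M : Type*} [CommRing R] [AddCommMonoid M] [Module R M]

noncomputable def toTrivSqZeroExtOfEnd (d : Module.End R M) :
    TensorAlgebra R M →ₐ[R] TrivSqZeroExt (TensorAlgebra R M) (TensorAlgebra R M) :=
  lift R ((TrivSqZeroExt.inlAlgHom R _ _).toLinearMap ∘ₗ ι R +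
    (TrivSqZeroExt.inrHom _ _).restrictScalars R ∘ₗ ι R ∘ₗ d)

lemma fst_toTrivSqZeroExtOfEnd (d : Module.End R M) (a : TensorAlgebra R M) :
    (toTrivSqZeroExtOfEnd d a).fst = a := by
  have h : (TrivSqZeroExt.fstHom R _ _).comp (toTrivSqZeroExtOfEnd d) = AlgHom.id R _ :=
    hom_ext (LinearMap.ext fun x => by simp [toTrivSqZeroExtOfEnd])
  exact DFunLike.congr_fun h a

/-- The derivation of `T(M)` extending `d`; Leibniz's rule is the `snd` part of `map_mul` for
`toTrivSqZeroExtOfEnd d`. -/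
noncomputable def derivLift (d : Module.End R M) : Module.End R (TensorAlgebra R M) :=
  (TrivSqZeroExt.sndHom _ _).restrictScalars R ∘ₗ (toTrivSqZeroExtOfEnd d).toLinearMap

@[simp]
lemma derivLift_ι (d : Module.End R M) (x : M) : derivLift d (ι R x) = ι R (d x) := by
  simp [derivLift, toTrivSqZeroExtOfEnd]

lemma derivLift_mul (d : Module.End R M) (a b : TensorAlgebra R M) :
    derivLift d (a * b) = derivLift d a * b + a * derivLift d b := by
  simp only [derivLift, LinearMap.comp_apply, LinearMap.coe_restrictScalars,
    AlgHom.toLinearMap_apply, map_mul, TrivSqZeroExt.sndHom_apply, TrivSqZeroExt.snd_mul,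
    fst_toTrivSqZeroExtOfEnd, smul_eq_mul, op_smul_eq_mul, add_comm]

lemma eq_derivLift {D : Module.End R (TensorAlgebra R M)} {d : Module.End R M}
    (hD : ∀ a b, D (a * b) = D a * b + a * D b) (hι : ∀ x, D (ι R x) = ι R (d x)) :
    D = derivLift d := by
  ext a
  induction a using TensorAlgebra.induction with
  | algebraMap r =>
    simp [Algebra.algebraMap_eq_smul_one, LinearMap.map_one_eq_zero_of_leibniz hD,
      LinearMap.map_one_eq_zero_of_leibniz (derivLift_mul d)]
  | ι x => simp [hι]
  | mul a b ha hb => simp [hD, derivLift_mul, ha, hb]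
  | add a b ha hb => simp [ha, hb]

variable (R M) in
noncomputable def derivLiftₗ : Module.End R M →ₗ[R] Module.End R (TensorAlgebra R M) where
  toFun := derivLift
  map_add' d d' := .symm <| eq_derivLift (fun a b => by
      simp only [LinearMap.add_apply, derivLift_mul, add_mul, mul_add]; abel)
    (fun x => by simp)
  map_smul' c d := .symm <| eq_derivLift (fun a b => by
      simp only [LinearMap.smul_apply, derivLift_mul, smul_add, smul_mul_assoc, mul_smul_comm])
    (fun x => by simp)

lemma derivLift_mul_sub_mul_derivLift (d : Module.End R M) (b : TensorAlgebra R M) :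
    derivLift d * mulLeft R b - mulLeft R b * derivLift d = mulLeft R (derivLift d b) := by
  ext a
  simp [derivLift_mul]

lemma lift_derivLift {A : Type*} [Ring A] [Algebra R A] (f : M →ₗ[R] A) (d : Module.End R M)
    (a : A) (hf : ∀ x, f (d x) = a * f x - f x * a) (b : TensorAlgebra R M) :
    lift R f (derivLift d b) = a * lift R f b - lift R f b * a := by
  induction b using TensorAlgebra.induction with
  | algebraMap r =>
    simp [Algebra.algebraMap_eq_smul_one, LinearMap.map_one_eq_zero_of_leibniz (derivLift_mul d)]
  | ι x => simp [hf]
  | mul b c hb hc =>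
    rw [derivLift_mul, map_add, map_mul, map_mul, map_mul, hb, hc]
    noncomm_ring
  | add b c hb hc =>
    rw [map_add, map_add, map_add, hb, hc]
    noncomm_ring

end

section

variable (R V W : Type*) [CommRing R] [AddCommMonoid V] [Module R V] [AddCommMonoid W]
  [Module R W]

/-- The paper's `T(W)·V`: as `T(W)` is generated by the primitive elements `w`, which act by
`c ↦ w c - c w`, the `T(W)`-submodule generated by `V` is the smallest submodule containing `V`
and stable under these commutators. -/
def adClosure : Submodule R (TensorAlgebra R (V × W)) :=
  sInf {p | range (ι R ∘ₗ inl R V W) ≤ p ∧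
    ∀ w : W, ∀ c ∈ p, ι R (inr R V W w) * c - c * ι R (inr R V W w) ∈ p}

variable {R V W}

lemma ι_inl_mem_adClosure (v : V) : ι R (inl R V W v) ∈ adClosure R V W :=
  Submodule.mem_sInf.2 fun _ hp => hp.1 ⟨v, rfl⟩

lemma commutator_mem_adClosure (w : W) {c : TensorAlgebra R (V × W)}
    (hc : c ∈ adClosure R V W) :
    ι R (inr R V W w) * c - c * ι R (inr R V W w) ∈ adClosure R V W :=
  Submodule.mem_sInf.2 fun p hp => hp.2 w c (Submodule.mem_sInf.1 hc p hp)

lemma adClosure_le {p : Submodule R (TensorAlgebra R (V × W))}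
    (hV : ∀ v, ι R (inl R V W v) ∈ p)
    (hW : ∀ w : W, ∀ c ∈ p, ι R (inr R V W w) * c - c * ι R (inr R V W w) ∈ p) :
    adClosure R V W ≤ p :=
  sInf_le ⟨by rintro _ ⟨v, rfl⟩; exact hV v, hW⟩

local notation "N" => adClosure R V W
local notation "κ" => lift R (Submodule.subtype N)
local notation "φ" => lift R (ι R ∘ₗ inr R V W)

noncomputable def adOnClosure : W →ₗ[R] Module.End R N :=
  LinearMap.mk₂ R
    (fun w c =>
      ⟨ι R (inr R V W w) * c - c * ι R (inr R V W w), commutator_mem_adClosure w c.2⟩)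
    (fun w w' c => Subtype.ext <| by simp only [map_add, Submodule.coe_add]; noncomm_ring)
    (fun r w c => Subtype.ext <| by
      simp only [map_smul, SetLike.val_smul, smul_sub, smul_mul_assoc, mul_smul_comm])
    (fun w c c' => Subtype.ext <| by simp only [Submodule.coe_add]; noncomm_ring)
    (fun r w c => Subtype.ext <| by
      simp only [SetLike.val_smul, smul_sub, smul_mul_assoc, mul_smul_comm])

@[simp]
lemma coe_adOnClosure_apply (w : W) (c : N) :
    (adOnClosure w c : TensorAlgebra R (V × W)) =
      ι R (inr R V W w) * c - c * ι R (inr R V W w) :=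
  rfl

noncomputable def inlAdClosure : V →ₗ[R] N :=
  (ι R ∘ₗ inl R V W).codRestrict _ ι_inl_mem_adClosure

@[simp]
lemma coe_inlAdClosure_apply (v : V) :
    ((inlAdClosure v : N) : TensorAlgebra R (V × W)) = ι R (inl R V W v) :=
  rfl

noncomputable def smashAction :
    TensorAlgebra R (V × W) →ₐ[R] Module.End R (TensorAlgebra R N ⊗[R] TensorAlgebra R W) :=
  lift R <| coprod (rTensorHom _ ∘ₗ LinearMap.mul R _ ∘ₗ ι R ∘ₗ inlAdClosure)
    (rTensorHom _ ∘ₗ derivLiftₗ R N ∘ₗ adOnClosure +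
      lTensorHom _ ∘ₗ LinearMap.mul R _ ∘ₗ ι R)

lemma smashAction_ι_inl (v : V) :
    smashAction (ι R (inl R V W v)) = rTensor _ (mulLeft R (ι R (inlAdClosure v))) := by
  simp only [smashAction, coe_inl, lift_ι_apply, coprod_apply, coe_comp, coe_rTensorHom,
    Function.comp_apply, map_zero, add_zero]
  rfl

lemma smashAction_ι_inr (w : W) :
    smashAction (ι R (inr R V W w)) =
      rTensor _ (derivLift (adOnClosure w)) + lTensor _ (mulLeft R (ι R w)) := by
  simp only [smashAction, derivLiftₗ, coe_inr, lift_ι_apply, coprod_apply, coe_comp,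
    coe_rTensorHom, Function.comp_apply, map_zero, LinearMap.add_apply, coe_mk,
    AddHom.coe_mk, coe_lTensorHom, zero_add]
  rfl

lemma smashAction_coe (x : N) :
    smashAction (x : TensorAlgebra R (V × W)) = rTensor _ (mulLeft R (ι R x)) := by
  let K := eqLocus (smashAction.toLinearMap ∘ₗ Submodule.subtype N)
    (rTensorHom _ ∘ₗ LinearMap.mul R _ ∘ₗ ι R)
  have mem_K (y : N) : y ∈ K ↔ smashAction (y : TensorAlgebra R (V × W)) =
      rTensor _ (mulLeft R (ι R y)) := Iff.rfl
  suffices N ≤ K.map (Submodule.subtype N) by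
    obtain ⟨y, hy, hyx⟩ := this x.2
    obtain rfl : y = x := Subtype.ext hyx
    exact hy
  refine adClosure_le (fun v => ⟨inlAdClosure v, ?_, rfl⟩) ?_
  · rw [SetLike.mem_coe, mem_K, coe_inlAdClosure_apply, smashAction_ι_inl]
  · rintro w _ ⟨x, hx, rfl⟩
    refine ⟨adOnClosure w x, ?_, rfl⟩
    rw [SetLike.mem_coe, mem_K] at hx ⊢
    rw [coe_adOnClosure_apply, map_sub, map_mul, map_mul, hx, smashAction_ι_inr,
      rTensor_add_lTensor_commutator, derivLift_mul_sub_mul_derivLift, derivLift_ι]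

lemma smashAction_lift_subtype (b : TensorAlgebra R N) :
    smashAction (κ b) = rTensor _ (mulLeft R b) := by
  have h : smashAction.comp κ =
      (Module.End.rTensorAlgHom R _ (TensorAlgebra R W)).comp (Algebra.lmul R _) :=
    hom_ext <| LinearMap.ext fun x => by
      simp only [AlgHom.comp_toLinearMap, LinearMap.comp_apply, AlgHom.toLinearMap_apply,
        lift_ι_apply, Submodule.subtype_apply, smashAction_coe]
      rfl
  exact DFunLike.congr_fun h b

lemma smashAction_lift_inr_one_tmul (h h' : TensorAlgebra R W) :
    smashAction (φ h) (1 ⊗ₜ h') = (1 : TensorAlgebra R N) ⊗ₜ (h * h') := by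
  induction h using TensorAlgebra.induction generalizing h' with
  | algebraMap r => simp [Algebra.algebraMap_eq_smul_one, smul_tmul']
  | ι w =>
    rw [lift_ι_apply, LinearMap.comp_apply, smashAction_ι_inr]
    simp [LinearMap.map_one_eq_zero_of_leibniz (derivLift_mul _)]
  | mul a b ha hb => rw [map_mul, map_mul, Module.End.mul_apply, hb, ha, mul_assoc]
  | add a b ha hb => simp [ha, hb, add_mul, tmul_add]

noncomputable def smashMul :
    TensorAlgebra R N ⊗[R] TensorAlgebra R W →ₗ[R] TensorAlgebra R (V × W) :=
  mul' R _ ∘ₗ map (AlgHom.toLinearMap κ) (AlgHom.toLinearMap φ)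

@[simp]
lemma smashMul_tmul (b : TensorAlgebra R N) (h : TensorAlgebra R W) :
    smashMul (b ⊗ₜ h) = κ b * φ h := by
  simp [smashMul]

lemma smashMul_comp_smashAction (a : TensorAlgebra R (V × W)) :
    smashMul ∘ₗ smashAction a = mulLeft R a ∘ₗ smashMul := by
  induction a using TensorAlgebra.induction with
  | algebraMap r => ext; simp [Algebra.smul_def, mul_assoc]
  | ι p =>
    obtain ⟨v, w, rfl⟩ : ∃ v w, p = inl R V W v + inr R V W w := ⟨p.1, p.2, by simp⟩
    refine TensorProduct.ext' fun b h => ?_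
    simp only [map_add, smashAction_ι_inl, smashAction_ι_inr, LinearMap.comp_apply,
      LinearMap.add_apply, rTensor_tmul, lTensor_tmul, mulLeft_apply, smashMul_tmul, map_mul,
      lift_ι_apply, Submodule.subtype_apply, coe_inlAdClosure_apply, add_mul,
      lift_derivLift (Submodule.subtype N) (adOnClosure w) (ι R (inr R V W w)) (fun _ => rfl)]
    noncomm_ring
  | mul a b ha hb =>
    rw [map_mul, Module.End.mul_eq_comp, ← comp_assoc, ha, comp_assoc, hb, ← comp_assoc,
      mulLeft_mul]
  | add a b ha hb =>
    rw [map_add, comp_add, ha, hb]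
    ext
    simp [add_mul]

lemma smashAction_smashMul_one_tmul_one (s : TensorAlgebra R N ⊗[R] TensorAlgebra R W) :
    smashAction (smashMul s) (1 ⊗ₜ 1) = s := by
  induction s using TensorProduct.induction_on with
  | zero => simp
  | tmul b h =>
    rw [smashMul_tmul, map_mul, Module.End.mul_apply, smashAction_lift_inr_one_tmul, mul_one,
      smashAction_lift_subtype, rTensor_tmul, mulLeft_apply, mul_one]
  | add s t hs ht => simp [hs, ht]

lemma smashMul_bijective :
    Function.Bijective (smashMul : TensorAlgebra R N ⊗[R] TensorAlgebra R W →ₗ[R] _) := by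
  refine ⟨Function.LeftInverse.injective (g := fun a => smashAction a (1 ⊗ₜ 1))
    smashAction_smashMul_one_tmul_one, fun a => ⟨smashAction a (1 ⊗ₜ 1), ?_⟩⟩
  rw [← LinearMap.comp_apply, smashMul_comp_smashAction]
  simp

lemma lift_subtype_adClosure_injective : Function.Injective κ := by
  intro b b' h
  apply tmul_one_injective (R := R) (M := W)
  apply smashMul_bijective.injective
  simpa using h

lemma lift_inr_injective : Function.Injective φ := by
  intro h h' hh
  apply one_tmul_injective (R := R) (M := N)
  apply smashMul_bijective.injective
  simpa using hh

end

end TensorAlgebra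

/-- the tensor algebra `T(V ⊕ W)` is the smash product
`T(T(W)·V) # T(W)`: writing `TWV = T(W)·V` for the `T(W)`-submodule of `T(V ⊕ W)`
generated by `V` under the adjoint action, the subalgebra generated by `TWV` is a copy of
the tensor algebra on `TWV`, it is stable under the adjoint action of `T(W)`, the
canonical map `T(W) → T(V ⊕ W)` is injective, and multiplication induces a linear
isomorphism `T(TWV) ⊗ T(W) ≅ T(V ⊕ W)`. -/
theorem tensor_algebra_smash_decomposition
    (F V W : Type*) [Field F] [AddCommGroup V] [Module F V] [AddCommGroup W] [Module F W]
    (TWV : Submodule F (TensorAlgebra F (V × W)))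
    (hTWV : TWV = sInf {p : Submodule F (TensorAlgebra F (V × W)) |
      LinearMap.range ((TensorAlgebra.ι F) ∘ₗ (LinearMap.inl F V W)) ≤ p ∧
      ∀ (w : W), ∀ c ∈ p,
        TensorAlgebra.ι F ((LinearMap.inr F V W) w) * c -
          c * TensorAlgebra.ι F ((LinearMap.inr F V W) w) ∈ p})
    (AT : Subalgebra F (TensorAlgebra F (V × W)))
    (hAT : AT = Algebra.adjoin F (TWV : Set (TensorAlgebra F (V × W))))
    (φW : TensorAlgebra F W →ₐ[F] TensorAlgebra F (V × W))
    (hφW : φW = TensorAlgebra.lift F ((TensorAlgebra.ι F) ∘ₗ (LinearMap.inr F V W))) :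
    (Function.Injective (TensorAlgebra.lift F TWV.subtype) ∧
      (TensorAlgebra.lift F TWV.subtype).range = AT) ∧
    (∀ (w : W), ∀ a ∈ AT,
      TensorAlgebra.ι F ((LinearMap.inr F V W) w) * a -
        a * TensorAlgebra.ι F ((LinearMap.inr F V W) w) ∈ AT) ∧
    Function.Injective φW ∧
    Function.Bijective
      ((LinearMap.mul' F (TensorAlgebra F (V × W))) ∘ₗ
        TensorProduct.map (Subalgebra.toSubmodule AT).subtype φW.toLinearMap) := by
  obtain rfl : TWV = TensorAlgebra.adClosure F V W := hTWV
  subst hAT hφW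
  have hrange : (TensorAlgebra.lift F (TensorAlgebra.adClosure F V W).subtype).range =
      Algebra.adjoin F (TensorAlgebra.adClosure F V W : Set (TensorAlgebra F (V × W))) := by
    rw [TensorAlgebra.range_lift, Submodule.coe_subtype, Subtype.range_coe]
  refine ⟨⟨TensorAlgebra.lift_subtype_adClosure_injective, hrange⟩,
    fun w _ => Algebra.commutator_mem_adjoin fun x hx =>
      Algebra.subset_adjoin (TensorAlgebra.commutator_mem_adClosure w hx),
    TensorAlgebra.lift_inr_injective, ?_⟩
  let e := (AlgEquiv.ofInjective _ TensorAlgebra.lift_subtype_adClosure_injective).trans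
    (Subalgebra.equivOfEq _ _ hrange)
  rw [← Function.Bijective.of_comp_iff _
    (TensorProduct.congr e.toLinearEquiv (.refl _ _)).bijective]
  convert TensorAlgebra.smashMul_bijective
  rw [← LinearEquiv.coe_toLinearMap, ← LinearMap.coe_comp]
  congr 1
  exact TensorProduct.ext' fun b h => rfl
end
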